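/- arXiv:1403.1355 — 3 statements merged into one kernel-verified Lean document; each statement's English description precedes it below -/
import Mathlib

section
/- Let V be a finite-dimensional real inner product space and let ρ > 0. Define s : [0,ρ) → [0,∞) by s(x) = x/(ρ−x), and define the parametrized collapse map c : sa⁺(V) × S^V → S^V by c(F, v) = v + s(‖F(v)‖)·F(v) if v ≠ ∞ and ‖F(v)‖ < ρ, and c(F, v) = ∞ otherwise. Then c is a continuous map. -/
/-!
For positive semidefinite `F` and `c ≥ 0`, pairing `w + c • F w` with `w` and with `F w` gives
`‖w‖ ≤ ‖w + c • F w‖` and `c * ‖F w‖ ≤ ‖w + c • F w‖`. The first inequality shows that the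
collapse map sends points near `∞` to points near `∞`. The second, with `c = s(‖F v‖)`, bounds
`‖c(F, v)‖` below by `‖F v‖² / (ρ - ‖F v‖)`, which blows up as `‖F v‖ ↑ ρ`; this gives
continuity where `‖F v‖ ≥ ρ`. Where `‖F v‖ < ρ` the map is locally given by a continuous formula.
-/

open scoped RealInnerProductSpace

/-- The parametrized collapse map `c : sa⁺(V) × S^V → S^V`:
`c(F, v) = v + s(‖F v‖) • F v` if `v ≠ ∞` and `‖F v‖ < ρ`, and `∞` otherwise,
where `s(x) = x / (ρ - x)`. -/
noncomputable def collapse {V : Type*} [NormedAddCommGroup V] [InnerProductSpace ℝ V]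
    (ρ : ℝ) (F : V →L[ℝ] V) : OnePoint V → OnePoint V
  | OnePoint.infty => OnePoint.infty
  | OnePoint.some v =>
      if ‖F v‖ < ρ then OnePoint.some (v + (‖F v‖ / (ρ - ‖F v‖)) • F v)
      else OnePoint.infty

open Filter Topology OnePoint

theorem OnePoint.tendsto_nhds_infty_iff_forall_lt_norm {α V : Type*} [NormedAddCommGroup V]
    [ProperSpace V] {l : Filter α} {g : α → OnePoint V} :
    Tendsto g l (𝓝 ∞) ↔ ∀ R : ℝ, ∀ᶠ x in l, ∀ w : V, g x = w → R < ‖w‖ := by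
  rw [OnePoint.hasBasis_nhds_infty.tendsto_right_iff]
  constructor
  · intro h R
    filter_upwards [h _ ⟨Metric.isClosed_closedBall, isCompact_closedBall 0 R⟩] with x hx w hw
    rw [hw] at hx
    simpa using hx
  · rintro h s ⟨-, hs⟩
    obtain ⟨R, hR⟩ := hs.isBounded.subset_closedBall 0
    filter_upwards [h R] with x hx
    cases hgx : g x using OnePoint.rec with
    | infty => exact Or.inr rfl
    | coe w => exact Or.inl ⟨w, fun hw => (hx w hgx).not_ge (by simpa using hR hw), rfl⟩

theorem tendsto_div_sub_mul_nhdsLT {ρ : ℝ} (hρ : 0 < ρ) :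
    Tendsto (fun a : ℝ => a / (ρ - a) * a) (𝓝[<] ρ) atTop := by
  have hgap : Tendsto (fun a : ℝ => ρ - a) (𝓝[<] ρ) (𝓝[>] 0) := by
    refine tendsto_nhdsWithin_of_tendsto_nhds_of_eventually_within _ ?_ ?_
    · have : Tendsto (fun a : ℝ => ρ - a) (𝓝 ρ) (𝓝 (ρ - ρ)) := tendsto_const_nhds.sub tendsto_id
      exact (sub_self ρ ▸ this).mono_left nhdsWithin_le_nhds
    · filter_upwards [self_mem_nhdsWithin] with a (ha : a < ρ) using sub_pos.2 ha
  have hsq : Tendsto (fun a : ℝ => a * a) (𝓝[<] ρ) (𝓝 (ρ * ρ)) :=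
    (tendsto_id.mul tendsto_id).mono_left nhdsWithin_le_nhds
  refine (hsq.pos_mul_atTop (mul_pos hρ hρ) hgap.inv_tendsto_nhdsGT_zero).congr fun a => ?_
  simp only [Pi.inv_apply]; ring

theorem eventually_lt_div_sub_mul {ρ a₀ : ℝ} (hρ : 0 < ρ) (ha₀ : ρ ≤ a₀) (R : ℝ) :
    ∀ᶠ a in 𝓝 a₀, a < ρ → R < a / (ρ - a) * a := by
  rcases ha₀.eq_or_lt with rfl | hlt
  · exact eventually_nhdsWithin_iff.1 ((tendsto_div_sub_mul_nhdsLT hρ).eventually_gt_atTop R)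
  · filter_upwards [lt_mem_nhds hlt] with a ha h using absurd h ha.not_gt

section InnerProduct

variable {V : Type*} [NormedAddCommGroup V] [InnerProductSpace ℝ V] {F : V →L[ℝ] V}

theorem norm_le_norm_add_smul_apply (hF : ∀ v, 0 ≤ ⟪F v, v⟫) {c : ℝ} (hc : 0 ≤ c) (w : V) :
    ‖w‖ ≤ ‖w + c • F w‖ := by
  have hinner : ‖w‖ ^ 2 ≤ ⟪w + c • F w, w⟫ := by
    rw [inner_add_left, real_inner_smul_left, real_inner_self_eq_norm_sq]
    nlinarith [mul_nonneg hc (hF w)]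
  have := hinner.trans (real_inner_le_norm _ w)
  nlinarith [norm_nonneg w, norm_nonneg (w + c • F w)]

theorem mul_norm_apply_le_norm_add_smul_apply (hF : ∀ v, 0 ≤ ⟪F v, v⟫) (c : ℝ) (w : V) :
    c * ‖F w‖ ≤ ‖w + c • F w‖ := by
  have hinner : c * ‖F w‖ ^ 2 ≤ ⟪w + c • F w, F w⟫ := by
    rw [inner_add_left, real_inner_smul_left, real_inner_self_eq_norm_sq, real_inner_comm]
    linarith [hF w]
  have := hinner.trans (real_inner_le_norm _ (F w))
  rcases (norm_nonneg (F w)).eq_or_lt with h0 | h0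
  · rw [← h0, mul_zero]; exact norm_nonneg _
  · exact le_of_mul_le_mul_right (by nlinarith) h0

end InnerProduct

section Collapse

variable {V : Type*} [NormedAddCommGroup V] [InnerProductSpace ℝ V] {ρ : ℝ} {F : V →L[ℝ] V}
  {v w : V}

theorem collapse_coe_of_lt (h : ‖F v‖ < ρ) :
    collapse ρ F v = ↑(v + (‖F v‖ / (ρ - ‖F v‖)) • F v) :=
  if_pos h

theorem collapse_coe_of_le (h : ρ ≤ ‖F v‖) : collapse ρ F v = ∞ :=
  if_neg h.not_gt

theorem collapse_coe_eq_coe_iff :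
    collapse ρ F v = w ↔ ‖F v‖ < ρ ∧ v + (‖F v‖ / (ρ - ‖F v‖)) • F v = w := by
  rcases lt_or_ge ‖F v‖ ρ with h | h
  · simp [collapse_coe_of_lt h, h]
  · simp [collapse_coe_of_le h, h.not_gt]

theorem norm_le_of_collapse_coe_eq_coe (hF : ∀ v, 0 ≤ ⟪F v, v⟫) (h : collapse ρ F v = w) :
    ‖v‖ ≤ ‖w‖ := by
  obtain ⟨hlt, rfl⟩ := collapse_coe_eq_coe_iff.1 h
  exact norm_le_norm_add_smul_apply hF (div_nonneg (norm_nonneg _) (sub_nonneg.2 hlt.le)) v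

theorem div_sub_mul_le_of_collapse_coe_eq_coe (hF : ∀ v, 0 ≤ ⟪F v, v⟫)
    (h : collapse ρ F v = w) : ‖F v‖ < ρ ∧ ‖F v‖ / (ρ - ‖F v‖) * ‖F v‖ ≤ ‖w‖ := by
  obtain ⟨hlt, rfl⟩ := collapse_coe_eq_coe_iff.1 h
  exact ⟨hlt, mul_norm_apply_le_norm_add_smul_apply hF _ v⟩

variable {X : Type*} [TopologicalSpace X] {A : X → V →L[ℝ] V}

theorem continuousAt_collapse_coe_of_lt (hA : Continuous A) {x : X} (h : ‖A x v‖ < ρ) :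
    ContinuousAt (fun q : X × V => collapse ρ (A q.1) q.2) (x, v) := by
  have happly : Continuous fun q : X × V => A q.1 q.2 := hA.fst'.clm_apply continuous_snd
  have hgap : ρ - ‖A x v‖ ≠ 0 := (sub_pos.2 h).ne'
  have hcont : ContinuousAt (fun q : X × V =>
      q.2 + (‖A q.1 q.2‖ / (ρ - ‖A q.1 q.2‖)) • A q.1 q.2) (x, v) :=
    continuousAt_snd.add ((happly.norm.continuousAt.div
      (continuousAt_const.sub happly.norm.continuousAt) hgap).smul happly.continuousAt)
  refine (continuous_coe.continuousAt.comp hcont).congr ?_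
  filter_upwards [(isOpen_lt happly.norm continuous_const).mem_nhds h] with q hq
  exact (collapse_coe_of_lt hq).symm

variable [ProperSpace V]

theorem continuousAt_collapse_infty (hApos : ∀ x v, 0 ≤ ⟪A x v, v⟫) (x : X) :
    ContinuousAt (fun p : X × OnePoint V => collapse ρ (A p.1) p.2) (x, ∞) := by
  refine tendsto_nhds_infty_iff_forall_lt_norm.2 fun R => ?_
  filter_upwards [tendsto_nhds_infty_iff_forall_lt_norm.1 (continuousAt_snd (p := (x, ∞))) R]
    with ⟨y, p⟩ hp w hw
  cases p using OnePoint.rec with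
  | infty => exact absurd hw (coe_ne_infty w).symm
  | coe v => exact (hp v rfl).trans_le (norm_le_of_collapse_coe_eq_coe (hApos y) hw)

theorem continuousAt_collapse_coe_of_le (hA : Continuous A) (hApos : ∀ x v, 0 ≤ ⟪A x v, v⟫)
    (hρ : 0 < ρ) {x : X} (h : ρ ≤ ‖A x v‖) :
    ContinuousAt (fun q : X × V => collapse ρ (A q.1) q.2) (x, v) := by
  have happly : Continuous fun q : X × V => A q.1 q.2 := hA.fst'.clm_apply continuous_snd
  rw [ContinuousAt, collapse_coe_of_le h]
  refine tendsto_nhds_infty_iff_forall_lt_norm.2 fun R => ?_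
  filter_upwards [happly.norm.continuousAt.eventually (eventually_lt_div_sub_mul hρ h R)]
    with q hq w hw
  obtain ⟨hlt, hle⟩ := div_sub_mul_le_of_collapse_coe_eq_coe (hApos q.1) hw
  exact (hq hlt).trans_le hle

theorem continuous_collapse (hA : Continuous A) (hApos : ∀ x v, 0 ≤ ⟪A x v, v⟫) (hρ : 0 < ρ) :
    Continuous fun p : X × OnePoint V => collapse ρ (A p.1) p.2 := by
  refine continuous_iff_continuousAt.2 fun ⟨x, p⟩ => ?_
  cases p using OnePoint.rec with
  | infty => exact continuousAt_collapse_infty hApos x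
  | coe v =>
    refine ((IsOpenEmbedding.id.prodMap isOpenEmbedding_coe).continuousAt_iff (x := (x, v))).1 ?_
    rcases lt_or_ge ‖A x v‖ ρ with h | h
    exacts [continuousAt_collapse_coe_of_lt hA h, continuousAt_collapse_coe_of_le hA hApos hρ h]

end Collapse

/-- For a finite-dimensional real inner product space `V` and `ρ > 0`, the parametrized
collapse map is continuous on `sa⁺(V) × S^V`, where `sa⁺(V)` is the space of positive
semidefinite self-adjoint continuous linear endomorphisms of `V` and `S^V` is the
one-point compactification of `V`. -/
theorem collapse_continuous {V : Type*} [NormedAddCommGroup V] [InnerProductSpace ℝ V]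
    [FiniteDimensional ℝ V] (ρ : ℝ) (hρ : 0 < ρ) :
    Continuous (fun p : {F : V →L[ℝ] V // (∀ v : V, 0 ≤ ⟪F v, v⟫) ∧
        ∀ v w : V, ⟪F v, w⟫ = ⟪v, F w⟫} × OnePoint V =>
      collapse ρ p.1.1 p.2) :=
  continuous_collapse continuous_subtype_val (fun F => F.2.1) hρ
end

section
/- Let V be a real inner product space, n ≥ 2, and let y = (y_1, …, y_n) ∈ V^n satisfy Σ_{i=1}^n y_i = 0 and Σ_{i=1}^n ‖y_i‖² = 1. Then there exist indices i, j ∈ {1, …, n} such that ‖y_i − y_j‖ ≥ 2/n^{3/2} (that is, ‖y_i − y_j‖ ≥ 4ρ, where ρ = 1/(2·n^{3/2})). -/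
/-! Some `y_i` carries at least the average mass, `‖y_i‖² ≥ 1/n`. Since the `y_j` sum to zero,
`n • y_i = ∑_j (y_i - y_j)`, so by the triangle inequality some `‖y_i - y_j‖` is at least
`‖y_i‖ ≥ 1/√n`, and `1/√n ≥ 2/n^{3/2}` as soon as `n ≥ 2`. -/

open Finset

lemma exists_sum_div_card_le {ι : Type*} [Fintype ι] [Nonempty ι] (f : ι → ℝ) :
    ∃ i, (∑ j, f j) / Fintype.card ι ≤ f i := by
  have hmean : ∑ _j : ι, (∑ j, f j) / Fintype.card ι = ∑ j, f j := by
    rw [sum_const, card_univ, nsmul_eq_mul,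
      mul_div_cancel₀ _ (Nat.cast_ne_zero.mpr Fintype.card_ne_zero)]
  obtain ⟨i, -, hi⟩ := exists_le_of_sum_le univ_nonempty hmean.le
  exact ⟨i, hi⟩

lemma exists_norm_le_norm_sub_of_sum_eq_zero {ι E : Type*} [Fintype ι] [NormedAddCommGroup E]
    [NormedSpace ℝ E] {y : ι → E} (hsum : ∑ j, y j = 0) (i : ι) :
    ∃ j, ‖y i‖ ≤ ‖y i - y j‖ := by
  have hcard : ∑ _j : ι, ‖y i‖ ≤ ∑ j, ‖y i - y j‖ :=
    calc ∑ _j : ι, ‖y i‖ = ‖Fintype.card ι • y i‖ := by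
          rw [sum_const, card_univ, RCLike.norm_nsmul ℝ]
      _ = ‖∑ j, (y i - y j)‖ := by rw [sum_sub_distrib, hsum, sub_zero, sum_const, card_univ]
      _ ≤ ∑ j, ‖y i - y j‖ := norm_sum_le _ _
  obtain ⟨j, -, hj⟩ := exists_le_of_sum_le ⟨i, mem_univ i⟩ hcard
  exact ⟨j, hj⟩

lemma sq_two_div_rpow_three_halves_le_inv {x : ℝ} (hx : 2 ≤ x) :
    (2 / x ^ ((3 : ℝ) / 2)) ^ 2 ≤ 1 / x := by
  have hx₀ : 0 < x := by linarith
  rw [div_pow, ← Real.rpow_mul_natCast hx₀.le, div_le_div_iff₀ (by positivity) hx₀]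
  norm_num
  nlinarith [mul_le_mul hx hx (by norm_num) hx₀.le]

/-- If `n ≥ 2` and `y = (y_1, …, y_n)` is a tuple of vectors in a real inner product
space with `Σ y_i = 0` and `Σ ‖y_i‖² = 1`, then there are indices `i, j` with
`‖y_i − y_j‖ ≥ 2 / n^(3/2) = 4ρ`, where `ρ = 1/(2·n^(3/2))`. -/
theorem exists_pair_norm_sub_ge {V : Type*} [NormedAddCommGroup V] [InnerProductSpace ℝ V]
    (n : ℕ) (hn : 2 ≤ n) (y : Fin n → V)
    (hsum : ∑ i, y i = 0) (hnorm : ∑ i, ‖y i‖ ^ 2 = 1) :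
    ∃ i j : Fin n, 2 / (n : ℝ) ^ ((3 : ℝ) / 2) ≤ ‖y i - y j‖ := by
  have : NeZero n := ⟨by omega⟩
  obtain ⟨i, hi⟩ := exists_sum_div_card_le fun i ↦ ‖y i‖ ^ 2
  rw [hnorm, Fintype.card_fin] at hi
  obtain ⟨j, hj⟩ := exists_norm_le_norm_sub_of_sum_eq_zero hsum i
  refine ⟨i, j, le_trans ?_ hj⟩
  refine le_of_pow_le_pow_left₀ two_ne_zero (norm_nonneg _) ?_
  exact (sq_two_div_rpow_three_halves_le_inv (by exact_mod_cast hn)).trans hi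
end

section
/- Let V be a real inner product space, n ≥ 1, let y = (y_1, …, y_n) ∈ V^n satisfy Σ_{i=1}^n y_i = 0 and Σ_{i=1}^n ‖y_i‖² = 1, and let t ∈ [0,1]. With F_t = (1−t)·P(y) + t·Id_V and ρ = 1/(2·n^{3/2}), for every vector v ∈ V there exists an index i ∈ {1, …, n} such that ‖F_t(v − y_i)‖ ≥ ρ. (This is the content of the Lemma asserting that the point [c(F_t, v ⊖ y_1), …, c(F_t, v ⊖ y_n)] of Sp^n(S^V) always lies in the subspace Sp^{n−1}(S^V): at least one of the collapse-map values is the basepoint at infinity.) -/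
open scoped RealInnerProductSpace

/-- The linear operator `P(y)` on `V` associated to a tuple `y = (y_1, …, y_n)` of
vectors of `V`, given by `P(y)(v) = Σ_j ⟪v, y_j⟫ • y_j`. -/
noncomputable def Pmap {V : Type*} [NormedAddCommGroup V] [InnerProductSpace ℝ V]
    {n : ℕ} (y : Fin n → V) : V →ₗ[ℝ] V where
  toFun v := ∑ j, ⟪v, y j⟫ • y j
  map_add' u v := by
    simp [inner_add_left, add_smul, Finset.sum_add_distrib]
  map_smul' c v := by
    simp [real_inner_smul_left, mul_smul, Finset.smul_sum]

/-!
Pair each `F_t(v - y_i)` with `y_i` and sum. Since `Σ y_i = 0` the terms in `v` cancel, leaving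
`-Σ ⟪y_i, F_t y_i⟫`; as `⟪x, P(y) x⟫ = Σ_j ⟪x, y_j⟫² ≥ ‖x‖⁴`, Cauchy–Schwarz gives
`Σ ⟪y_i, F_t y_i⟫ ≥ 1/n`. If every `‖F_t(v - y_i)‖` were below `ρ`, the same sum would be at
most `ρ Σ ‖y_i‖ ≤ ρ √n = 1/(2n)`.
-/

namespace Pmap

variable {V : Type*} [NormedAddCommGroup V] [InnerProductSpace ℝ V] {n : ℕ}

theorem inner_self_apply (y : Fin n → V) (x : V) : ⟪x, Pmap y x⟫ = ∑ j, ⟪x, y j⟫ ^ 2 := by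
  simp [Pmap, inner_sum, real_inner_smul_right, sq]

theorem norm_pow_four_le_inner_self_apply (y : Fin n → V) (i : Fin n) :
    ‖y i‖ ^ 4 ≤ ⟪y i, Pmap y (y i)⟫ := by
  rw [inner_self_apply, show ‖y i‖ ^ 4 = ⟪y i, y i⟫ ^ 2 by
    rw [real_inner_self_eq_norm_sq]; ring]
  exact Finset.single_le_sum (f := fun j => ⟪y i, y j⟫ ^ 2) (fun j _ => sq_nonneg _)
    (Finset.mem_univ i)

theorem sq_sum_norm_sq_le_card_mul_sum_inner (y : Fin n → V) :
    (∑ i, ‖y i‖ ^ 2) ^ 2 ≤ n * ∑ i, ⟪y i, Pmap y (y i)⟫ := by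
  calc (∑ i, ‖y i‖ ^ 2) ^ 2 ≤ n * ∑ i, (‖y i‖ ^ 2) ^ 2 := by
        simpa using sq_sum_le_card_mul_sum_sq (s := Finset.univ) (f := fun i => ‖y i‖ ^ 2)
    _ ≤ n * ∑ i, ⟪y i, Pmap y (y i)⟫ := by
        gcongr with i
        simpa [← pow_mul] using norm_pow_four_le_inner_self_apply y i

end Pmap

theorem sum_norm_le_sqrt_card {E : Type*} [SeminormedAddCommGroup E] {n : ℕ} {y : Fin n → E}
    (hnorm : ∑ i, ‖y i‖ ^ 2 = 1) : ∑ i, ‖y i‖ ≤ √n := by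
  apply Real.le_sqrt_of_sq_le
  simpa [hnorm] using sq_sum_le_card_mul_sum_sq (s := Finset.univ) (f := fun i => ‖y i‖)

section

variable {V : Type*} [NormedAddCommGroup V] [InnerProductSpace ℝ V] {n : ℕ}

theorem one_div_card_le_sum_inner_homotopy_apply (hn : 1 ≤ n) {y : Fin n → V}
    (hnorm : ∑ i, ‖y i‖ ^ 2 = 1) {t : ℝ} (h0 : 0 ≤ t) (h1 : t ≤ 1) :
    1 / (n : ℝ) ≤ ∑ i, ⟪y i, ((1 - t) • Pmap y + t • (LinearMap.id : V →ₗ[ℝ] V)) (y i)⟫ := by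
  have hn0 : (0 : ℝ) < n := by positivity
  have hP : 1 / (n : ℝ) ≤ ∑ i, ⟪y i, Pmap y (y i)⟫ := by
    rw [div_le_iff₀ hn0, mul_comm]
    simpa [hnorm] using Pmap.sq_sum_norm_sq_le_card_mul_sum_inner y
  have hn1 : 1 / (n : ℝ) ≤ 1 := by rw [div_le_one hn0]; exact_mod_cast hn
  have hsplit : ∑ i, ⟪y i, ((1 - t) • Pmap y + t • (LinearMap.id : V →ₗ[ℝ] V)) (y i)⟫ =
      (1 - t) * ∑ i, ⟪y i, Pmap y (y i)⟫ + t * ∑ i, ‖y i‖ ^ 2 := by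
    simp [inner_add_right, real_inner_smul_right, Finset.sum_add_distrib, Finset.mul_sum]
  rw [hsplit, hnorm]
  nlinarith

theorem exists_le_norm_map_sub (F : V →ₗ[ℝ] V) {y : Fin n → V} (hsum : ∑ i, y i = 0)
    {r : ℝ} (hr : r * ∑ i, ‖y i‖ < ∑ i, ⟪y i, F (y i)⟫) (v : V) :
    ∃ i, r ≤ ‖F (v - y i)‖ := by
  by_contra! hsmall
  have hcancel : ∑ i, ⟪y i, F (v - y i)⟫ = -∑ i, ⟪y i, F (y i)⟫ := by
    simp [inner_sub_right, Finset.sum_sub_distrib, ← sum_inner, hsum]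
  have hbound : ∑ i, ⟪y i, F (y i)⟫ ≤ r * ∑ i, ‖y i‖ := by
    calc ∑ i, ⟪y i, F (y i)⟫ = ∑ i, -⟪y i, F (v - y i)⟫ := by
          rw [Finset.sum_neg_distrib, hcancel, neg_neg]
      _ ≤ ∑ i, ‖y i‖ * r := by
          gcongr with i
          exact (neg_le_abs _).trans <| (abs_real_inner_le_norm _ _).trans <|
            mul_le_mul_of_nonneg_left (hsmall i).le (norm_nonneg _)
      _ = r * ∑ i, ‖y i‖ := by rw [← Finset.sum_mul, mul_comm]
  exact hbound.not_gt hr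

end

/-- If `y ∈ S(V,n)` (i.e. `Σ y_i = 0` and `Σ ‖y_i‖² = 1`) and `t ∈ [0,1]`, then with
`F_t = (1−t)·P(y) + t·Id` and `ρ = 1/(2·n^(3/2))`, for every vector `v ∈ V` there exists
an index `i` with `‖F_t(v − y_i)‖ ≥ ρ`. -/
theorem exists_norm_Ft_sub_ge {V : Type*} [NormedAddCommGroup V] [InnerProductSpace ℝ V]
    (n : ℕ) (hn : 1 ≤ n) (y : Fin n → V)
    (hsum : ∑ i, y i = 0) (hnorm : ∑ i, ‖y i‖ ^ 2 = 1)
    (t : ℝ) (h0 : 0 ≤ t) (h1 : t ≤ 1) (v : V) :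
    ∃ i : Fin n, 1 / (2 * (n : ℝ) ^ ((3 : ℝ) / 2)) ≤
      ‖((1 - t) • Pmap y + t • (LinearMap.id : V →ₗ[ℝ] V)) (v - y i)‖ := by
  refine exists_le_norm_map_sub _ hsum ?_ v
  have hn0 : (0 : ℝ) < n := by positivity
  calc 1 / (2 * (n : ℝ) ^ ((3 : ℝ) / 2)) * ∑ i, ‖y i‖
      ≤ 1 / (2 * (n : ℝ) ^ ((3 : ℝ) / 2)) * √n := by
        gcongr
        exact sum_norm_le_sqrt_card hnorm
    _ = 1 / (2 * n) := by
        rw [show (3 : ℝ) / 2 = 1 + 1 / 2 by norm_num, Real.rpow_add hn0, Real.rpow_one,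
          ← Real.sqrt_eq_rpow]
        field_simp
    _ < 1 / n := by gcongr; linarith
    _ ≤ _ := one_div_card_le_sum_inner_homotopy_apply hn hnorm h0 h1
end
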